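/- Let F be L-smooth and μ-strongly convex with minimum F_⋆, and suppose one inexact gradient step θ_{t+1} = θ_t - (1/L)r_t satisfies ‖r_t - ∇F(θ_t)‖² ≤ A + B‖∇F(θ_t)‖² with 0 ≤ B < 1. Then F(θ_{t+1}) - F_⋆ ≤ A/(2L) + (1 - (μ/L)(1 - B))(F(θ_t) - F_⋆). -/
import Mathlib


open scoped RealInnerProductSpace BigOperators

/-- One inexact gradient step on an `Lc`-smooth, μ-strongly convex `F` with
gradient error `‖r - ∇F(θt)‖² ≤ A + B‖∇F(θt)‖²` (`0 ≤ B < 1`) contracts the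
optimality gap: `F(θ_{t+1}) - F⋆ ≤ A/(2Lc) + (1 - (μ/Lc)(1-B))(F(θt) - F⋆)`. -/
theorem inexact_gradient_step_contraction {d : ℕ} (Lc μ A B : ℝ)
    (hL : 0 < Lc) (hμ : 0 < μ) (hA : 0 ≤ A) (hB0 : 0 ≤ B) (hB1 : B < 1)
    (F : EuclideanSpace ℝ (Fin d) → ℝ)
    (g : EuclideanSpace ℝ (Fin d) → EuclideanSpace ℝ (Fin d))
    (hgrad : ∀ θ, HasGradientAt F (g θ) θ)
    (hsmooth : ∀ θ θ', F θ' - F θ - ⟪g θ, θ' - θ⟫ ≤ Lc / 2 * ‖θ' - θ‖ ^ 2)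
    (hsc : ∀ θ θ', F θ' - F θ - ⟪g θ, θ' - θ⟫ ≥ μ / 2 * ‖θ' - θ‖ ^ 2)
    (θs : EuclideanSpace ℝ (Fin d)) (hmin : ∀ θ, F θs ≤ F θ)
    (θt r : EuclideanSpace ℝ (Fin d))
    (hr : ‖r - g θt‖ ^ 2 ≤ A + B * ‖g θt‖ ^ 2) :
    F (θt - (1 / Lc) • r) - F θs ≤
      A / (2 * Lc) + (1 - μ / Lc * (1 - B)) * (F θt - F θs) := by
  have hLne : Lc ≠ 0 := ne_of_gt hL
  have hμne : μ ≠ 0 := ne_of_gt hμ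
  set θ' := θt - (1 / Lc) • r with hθ'
  set G := ‖g θt‖ ^ 2 with hG
  set E := ‖r - g θt‖ ^ 2 with hE
  -- norm expansion : ‖r‖² = G + 2⟪g, r - g⟫ + E
  have hexp : ‖r‖ ^ 2 = G + 2 * ⟪g θt, r - g θt⟫ + E := by
    have := norm_add_sq_real (g θt) (r - g θt)
    simpa [add_sub_cancel, hG, hE] using this
  have hinner : ⟪g θt, r⟫ = G + ⟪g θt, r - g θt⟫ := by
    rw [inner_sub_right, real_inner_self_eq_norm_sq, hG]; ring
  -- descent step from smoothness
  have hstep := hsmooth θt θ'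
  have hdiff : θ' - θt = -((1 / Lc) • r) := by
    simp [hθ', sub_sub_cancel_left]
  rw [hdiff] at hstep
  have h1 : ⟪g θt, -((1 / Lc) • r)⟫ = -(1 / Lc) * ⟪g θt, r⟫ := by
    rw [inner_neg_right, real_inner_smul_right]; ring
  have h2 : ‖-((1 / Lc) • r)‖ ^ 2 = (1 / Lc) ^ 2 * ‖r‖ ^ 2 := by
    rw [norm_neg, norm_smul]
    simp [mul_pow, abs_of_pos (by positivity : (0:ℝ) < 1 / Lc)]
  rw [h1, h2] at hstep
  -- identity turning the RHS into fraction-free form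
  have hid1 : -(1 / Lc) * ⟪g θt, r⟫ + Lc / 2 * ((1 / Lc) ^ 2 * ‖r‖ ^ 2)
      = -(1 / (2 * Lc)) * G + 1 / (2 * Lc) * E := by
    rw [hinner, hexp]; field_simp; try ring
  -- descent: F θ' ≤ F θt - (1/(2L)) G + (1/(2L)) E
  have hdesc : F θ' ≤ F θt - 1 / (2 * Lc) * G + 1 / (2 * Lc) * E := by
    linarith [hstep, hid1]
  -- PL inequality from strong convexity between θt and θs, via Cauchy-Schwarz
  have hPL : 2 * μ * (F θt - F θs) ≤ G := by
    have hsc' := hsc θt θs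
    have hcs : |⟪g θt, θs - θt⟫| ≤ ‖g θt‖ * ‖θs - θt‖ := abs_real_inner_le_norm _ _
    have hcs' : -(‖g θt‖ * ‖θs - θt‖) ≤ ⟪g θt, θs - θt⟫ := neg_le_of_abs_le hcs
    nlinarith [sq_nonneg (μ * ‖θs - θt‖ - ‖g θt‖), hsc', hcs', hμ, hG]
  -- combine: scale hr and hPL by positive constants
  have hc1 : 1 / (2 * Lc) * E ≤ 1 / (2 * Lc) * (A + B * G) :=
    mul_le_mul_of_nonneg_left hr (by positivity)
  have hc2 := mul_le_mul_of_nonneg_left hPL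
    (div_nonneg (by linarith) (by positivity) : (0:ℝ) ≤ (1 - B) / (2 * Lc))
  have hid4 : 1 / (2 * Lc) * (A + B * G) = A / (2 * Lc) + B * (1 / (2 * Lc) * G) := by
    field_simp; try ring
  have hid5 : (1 - B) / (2 * Lc) * (2 * μ * (F θt - F θs))
      = μ / Lc * (1 - B) * (F θt - F θs) := by field_simp; try ring
  have hid6 : (1 - B) / (2 * Lc) * G = 1 / (2 * Lc) * G - B * (1 / (2 * Lc) * G) := by
    ring
  linarith [hdesc, hc1, hc2, hid4, hid5, hid6]
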